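/- Corollary to the Degree Change Lemma: with the notation and hypotheses of the Degree Change Lemma, if deg Λ⁽¹⁾(x) = deg m(x) − deg r(x) exactly, then Λ⁽¹⁾(x) is itself a minimal partial inverse of b(x). -/

import Mathlib

open Polynomial

/-! If `Λ'` is nonzero with `r' = bΛ' mod m` of smaller degree than `r = bΛ mod m`, then `m`
divides `Λ'r − Λr'`, and this difference is nonzero by the minimality of `Λ`. Since
`deg Λ + deg r' < deg Λ + deg r ≤ deg m`, a nonzero multiple of `m` of this form forces
`deg Λ' + deg r ≥ deg m`. For `Λ₁` that bound is attained, so no such `Λ'` has smaller degree. -/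

/-- A nonzero `Λ` is a minimal partial inverse of `b` w.r.t. `m` if every
nonzero `Λ'` with `deg(bΛ' mod m) ≤ deg(bΛ mod m)` has `deg Λ' ≥ deg Λ`. -/
def MinimalPartialInverse {F : Type*} [Field F] (b m Λ : F[X]) : Prop :=
  Λ ≠ 0 ∧ ∀ Λ' : F[X], Λ' ≠ 0 →
    (b * Λ' % m).degree ≤ (b * Λ % m).degree → Λ.natDegree ≤ Λ'.natDegree

theorem EuclideanDomain.dvd_mul_mod_sub_mul_mod {R : Type*} [EuclideanDomain R] (b m Λ Λ' : R) :
    m ∣ Λ' * (b * Λ % m) - Λ * (b * Λ' % m) := by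
  rw [mod_eq_sub_mul_div, mod_eq_sub_mul_div]
  exact ⟨Λ * (b * Λ' / m) - Λ' * (b * Λ / m), by ring⟩

theorem Polynomial.degree_le_of_dvd_sub {R : Type*} [Ring R] [NoZeroDivisors R] {m p q : R[X]}
    (hdvd : m ∣ p - q) (hne : p ≠ q) (hq : q.degree < m.degree) : m.degree ≤ p.degree := by
  have hm : m.degree ≤ (p - q).degree := degree_le_of_dvd hdvd (sub_ne_zero.mpr hne)
  by_contra! hp
  exact (hm.trans (degree_sub_le p q)).not_gt (max_lt hp hq)

namespace MinimalPartialInverse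

variable {F : Type*} [Field F] {b m Λ Λ' : F[X]}

theorem mul_mod_ne_mul_mod (hmin : MinimalPartialInverse b m Λ) (hΛ' : Λ' ≠ 0)
    (hlt : (b * Λ' % m).degree < (b * Λ % m).degree) :
    Λ' * (b * Λ % m) ≠ Λ * (b * Λ' % m) := by
  set r := b * Λ % m
  set r' := b * Λ' % m
  intro he
  have hr : r ≠ 0 := degree_ne_bot.mp (ne_bot_of_gt hlt)
  have hr' : r' ≠ 0 := by
    intro h
    rw [h, mul_zero] at he
    exact mul_ne_zero hΛ' hr he
  have hdeg := congrArg natDegree he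
  rw [natDegree_mul hΛ' hr, natDegree_mul hmin.1 hr'] at hdeg
  have hΛΛ' : Λ.natDegree ≤ Λ'.natDegree := hmin.2 Λ' hΛ' hlt.le
  have hr'r : r'.natDegree < r.natDegree := natDegree_lt_natDegree hr' hlt
  omega

/-- The degree change lemma. -/
theorem natDegree_le_add (hmin : MinimalPartialInverse b m Λ)
    (hΛdeg : Λ.natDegree + (b * Λ % m).natDegree ≤ m.natDegree) (hΛ' : Λ' ≠ 0)
    (hlt : (b * Λ' % m).degree < (b * Λ % m).degree) :
    m.natDegree ≤ Λ'.natDegree + (b * Λ % m).natDegree := by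
  set r := b * Λ % m
  set r' := b * Λ' % m
  have hdvd : m ∣ Λ' * r - Λ * r' := EuclideanDomain.dvd_mul_mod_sub_mul_mod b m Λ Λ'
  have hne := hmin.mul_mod_ne_mul_mod hΛ' hlt
  have hm : m ≠ 0 := ne_zero_of_dvd_ne_zero (sub_ne_zero.mpr hne) hdvd
  have hsmall : (Λ * r').degree < m.degree := by
    rcases eq_or_ne r' 0 with hr' | hr'
    · rw [hr', mul_zero, degree_zero]
      exact bot_lt_iff_ne_bot.mpr (degree_ne_bot.mpr hm)
    · have hr'r : r'.natDegree < r.natDegree := natDegree_lt_natDegree hr' hlt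
      apply degree_lt_degree
      rw [natDegree_mul hmin.1 hr']
      omega
  calc m.natDegree ≤ (Λ' * r).natDegree :=
        natDegree_le_natDegree (degree_le_of_dvd_sub hdvd hne hsmall)
    _ ≤ Λ'.natDegree + r.natDegree := natDegree_mul_le

end MinimalPartialInverse

theorem degree_change_corollary_general {F : Type*} [Field F] (b m Λ r : F[X])
    (hmin : MinimalPartialInverse b m Λ) (hr : r = b * Λ % m)
    (hΛdeg : Λ.natDegree + r.natDegree ≤ m.natDegree)
    (Λ₁ : F[X]) (hΛ₁ : Λ₁ ≠ 0)
    (h₁ : (b * Λ₁ % m).degree < r.degree)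
    (heq : Λ₁.natDegree + r.natDegree = m.natDegree) :
    MinimalPartialInverse b m Λ₁ := by
  subst hr
  refine ⟨hΛ₁, fun Λ' hΛ' hle => ?_⟩
  have := hmin.natDegree_le_add hΛdeg hΛ' (hle.trans_lt h₁)
  omega

/-- Corollary to the Degree Change Lemma: if moreover
`deg Λ⁽¹⁾ = deg m − deg r` exactly, then `Λ⁽¹⁾` is itself a minimal partial
inverse of `b`. -/
theorem degree_change_corollary {F : Type*} [Field F] (b m Λ r : F[X])
    (hb : b ≠ 0) (hm : m ≠ 0) (hdeg : b.degree < m.degree)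
    (hmin : MinimalPartialInverse b m Λ) (hr : r = b * Λ % m)
    (hΛdeg : Λ.natDegree + r.natDegree ≤ m.natDegree)
    (Λ₁ : F[X]) (hΛ₁ : Λ₁ ≠ 0)
    (h₁ : (b * Λ₁ % m).degree < r.degree)
    (heq : Λ₁.natDegree + r.natDegree = m.natDegree) :
    MinimalPartialInverse b m Λ₁ :=
  degree_change_corollary_general b m Λ r hmin hr hΛdeg Λ₁ hΛ₁ h₁ heq
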